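/- arXiv:1409.1141 — 2 statements merged into one kernel-verified Lean document; each statement's English description precedes it below -/
import Mathlib

section
/- Let R be a local ring and M a finitely generated R-module with m^2 M = 0 such that k is not a direct summand of M. Then Soc(M) = mM. -/
open CategoryTheory IsLocalRing TensorProduct

variable (R : Type) [CommRing R]

/-- Length of a module, as the Krull dimension of its submodule lattice. -/
noncomputable def len (M : Type) [AddCommGroup M] [Module R M] : ℕ :=
  (WithBot.unbotD 0 (Order.krullDim (Submodule R M))).toNat

/-- Minimal number of generators. -/
noncomputable def nu [IsLocalRing R] (M : Type) [AddCommGroup M] [Module R M] : ℕ :=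
  len R (M ⧸ (maximalIdeal R • (⊤ : Submodule R M)))

/-- The invariant `γ(M) = λ(M)/ν(M) - 1`. -/
noncomputable def gam [IsLocalRing R] (M : Type) [AddCommGroup M] [Module R M] : ℚ :=
  (len R M : ℚ) / (nu R M) - 1

/-- `Tor_i^R(M, N)`. -/
noncomputable def torM (i : ℕ) (M N : Type) [AddCommGroup M] [Module R M]
    [AddCommGroup N] [Module R N] : ModuleCat.{0} R :=
  ((Tor (ModuleCat.{0} R) i).obj (ModuleCat.of R M)).obj (ModuleCat.of R N)

/-- Betti numbers: `b_i(M) = dim_k Tor_i^R(k, M)`, computed as a length over `R`. -/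
noncomputable def betti [IsLocalRing R] (M : Type) [AddCommGroup M] [Module R M] (i : ℕ) : ℕ :=
  len R (torM R i (ResidueField R) M)

/-- `N` is (isomorphic to) the `j`-th syzygy of `M` in a minimal free resolution. -/
noncomputable def IsMinSyzygy [IsLocalRing R] : ℕ → ModuleCat.{0} R → ModuleCat.{0} R → Prop
  | 0, M, N => Nonempty (N ≃ₗ[R] M)
  | (j+1), M, N => ∃ P : ModuleCat.{0} R, IsMinSyzygy j M P ∧
      ∃ (n : ℕ) (f : (Fin n → R) →ₗ[R] P), Function.Surjective f ∧
        LinearMap.ker f ≤ maximalIdeal R • (⊤ : Submodule R (Fin n → R)) ∧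
        Nonempty (N ≃ₗ[R] LinearMap.ker f)

/-- The socle of a module: elements killed by the maximal ideal. -/
noncomputable def socle [IsLocalRing R] (M : Type) [AddCommGroup M] [Module R M] :
    Submodule R M :=
  ⨅ a ∈ maximalIdeal R, LinearMap.ker (LinearMap.lsmul R M a)

/-- `k` is a direct summand of `M`. -/
def ResidueFieldSummand [IsLocalRing R] (M : Type) [AddCommGroup M] [Module R M] : Prop :=
  ∃ (f : ResidueField R →ₗ[R] M) (g : M →ₗ[R] ResidueField R), g.comp f = LinearMap.id

/-- `N` has infinite projective dimension: no minimal syzygy of `N` is free. -/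
def InfiniteProjDim [IsLocalRing R] (N : Type) [AddCommGroup N] [Module R N] : Prop :=
  ¬ ∃ (n : ℕ) (S : ModuleCat.{0} R), IsMinSyzygy R n (ModuleCat.of R N) S ∧ Module.Free R S

/-- `ω` is a dualizing (canonical) module of the Artinian local ring `R`. -/
def IsDualizing [IsLocalRing R] (ω : Type) [AddCommGroup ω] [Module R ω] : Prop :=
  Module.Finite R ω ∧ Module.Injective R ω ∧ len R ↥(socle R ω) = 1

/-! An element of the socle outside `mM` spans a copy of `k`. Its image in the `k`-vector space
`M/mM` is nonzero, so some functional `M/mM → k` sends it to `1`, and composing with `M → M/mM`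
splits the inclusion `k → M`. Conversely `m² M = 0` puts `mM` inside the socle. -/

section

variable {R} [IsLocalRing R] {M : Type} [AddCommGroup M] [Module R M]

theorem mem_socle_iff {x : M} : x ∈ socle R M ↔ ∀ a ∈ maximalIdeal R, a • x = 0 := by
  simp [socle, Submodule.mem_iInf]

theorem smul_top_le_socle (h : maximalIdeal R ^ 2 • (⊤ : Submodule R M) = ⊥) :
    maximalIdeal R • (⊤ : Submodule R M) ≤ socle R M := fun x hx =>
  mem_socle_iff.mpr fun a ha => by
    have : a • x ∈ maximalIdeal R ^ 2 • (⊤ : Submodule R M) := by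
      rw [sq, mul_smul]
      exact Submodule.smul_mem_smul ha hx
    simpa [h] using this

theorem exists_linearMap_from_residueField_apply_one_eq {x : M} (hx : x ∈ socle R M) :
    ∃ f : ResidueField R →ₗ[R] M, f 1 = x :=
  ⟨(maximalIdeal R).liftQ (LinearMap.toSpanSingleton R M x) fun a ha => by
      simpa using mem_socle_iff.mp hx a ha, one_smul R x⟩

theorem exists_linearMap_to_residueField_apply_eq_one {x : M}
    (hx : x ∉ maximalIdeal R • (⊤ : Submodule R M)) :
    ∃ g : M →ₗ[R] ResidueField R, g x = 1 := by
  have hx' : Submodule.Quotient.mk (p := maximalIdeal R • (⊤ : Submodule R M)) x ≠ 0 := by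
    simpa [Submodule.Quotient.mk_eq_zero] using hx
  let := Ideal.Quotient.field (maximalIdeal R)
  obtain ⟨φ, hφ⟩ := Module.Projective.exists_dual_eq_one (R ⧸ maximalIdeal R) hx'
  exact ⟨(φ.restrictScalars R).comp (Submodule.mkQ _), hφ⟩

theorem residueFieldSummand_of_mem_socle_of_notMem_smul_top {x : M} (hs : x ∈ socle R M)
    (hx : x ∉ maximalIdeal R • (⊤ : Submodule R M)) : ResidueFieldSummand R M := by
  obtain ⟨f, hf⟩ := exists_linearMap_from_residueField_apply_one_eq hs
  obtain ⟨g, hg⟩ := exists_linearMap_to_residueField_apply_eq_one hx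
  refine ⟨f, g, LinearMap.ext fun y => ?_⟩
  obtain ⟨r, rfl⟩ := residue_surjective y
  have hr : residue R r = r • (1 : ResidueField R) := Algebra.algebraMap_eq_smul_one r
  simp [hr, hf, hg]

end

theorem stmt12 [IsLocalRing R]
    (M : Type) [AddCommGroup M] [Module R M]
    (hm2M : maximalIdeal R ^ 2 • (⊤ : Submodule R M) = ⊥)
    (hsum : ¬ ResidueFieldSummand R M) :
    socle R M = maximalIdeal R • (⊤ : Submodule R M) :=
  le_antisymm
    (fun _ hs => not_not.mp fun hx =>
      hsum (residueFieldSummand_of_mem_socle_of_notMem_smul_top hs hx))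
    (smul_top_le_socle hm2M)
end

section
/- Let R be a commutative local ring and 0 → N →^φ R^2 →^ψ M → 0 a short exact sequence of finitely generated R-modules with M faithful. If Tor_2^R(M,M) = 0, then N is generated by at most one element. -/
open CategoryTheory IsLocalRing TensorProduct

variable (R : Type) [CommRing R]

/-!
Let `a₁, …, aₜ ∈ R²` be the images under `φ` of a minimal generating family of `N`, so that the
relation module `K ⊆ Rᵗ` of the `aⱼ` has all coordinates in `𝔪`, and let `I` be the ideal generated
by the coordinates of the `aⱼ`. The `2 × 2` minors of the `aⱼ` annihilate `M = R² / N`, so they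
vanish by faithfulness, and hence `aⱼ(u) eᵢ - aᵢ(u) eⱼ ∈ K`. As `Tor₂(M, M) ≅ Tor₁(M, N) = 0`, the
map `M ⊗ K → M ⊗ Rᵗ` is injective, so `∑ᵤ ψ(eᵤ) ⊗ (aⱼ(u) eᵢ - aᵢ(u) eⱼ) = 0` in `M ⊗ K`. Right
exactness of `- ⊗ K` then puts `aⱼ(u)` in `I 𝔪` whenever `t ≥ 2`, and Nakayama gives `I = 0`,
i.e. `N = 0`; if `t ≤ 1` there is nothing to prove.
-/

section Resolution

variable {R} {M F₀ F₁ F₂ : Type} [AddCommGroup M] [Module R M]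
  [AddCommGroup F₀] [Module R F₀] [Module.Projective R F₀]
  [AddCommGroup F₁] [Module R F₁] [Module.Projective R F₁]
  [AddCommGroup F₂] [Module R F₂] [Module.Projective R F₂]
  {d₂ : F₂ →ₗ[R] F₁} {d₁ : F₁ →ₗ[R] F₀} {ε : F₀ →ₗ[R] M}

noncomputable def projectiveResolutionOfExact (h₂ : Function.Exact d₂ d₁)
    (h₁ : Function.Exact d₁ ε) (hε : Function.Surjective ε) :
    ProjectiveResolution (ModuleCat.of R M) :=
  have hd₂₁ : ModuleCat.ofHom d₂ ≫ ModuleCat.ofHom d₁ = 0 := by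
    ext x; exact h₂.apply_apply_eq_zero x
  have hd₁ε : ModuleCat.ofHom d₁ ≫ ModuleCat.ofHom ε = 0 := by
    ext x; exact h₁.apply_apply_eq_zero x
  let C : ChainComplex (ModuleCat R) ℕ :=
    ChainComplex.mk _ _ _ _ _ hd₂₁ fun S ↦ ⟨Projective.syzygies S.f, Projective.d S.f,
      (Category.assoc _ _ _).trans (by rw [Limits.kernel.condition]; exact Limits.comp_zero)⟩
  { complex := C
    projective n := by
      rcases n with _ | _ | _ | n
      · exact inferInstanceAs (Projective (ModuleCat.of R F₀))
      · exact inferInstanceAs (Projective (ModuleCat.of R F₁))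
      · exact inferInstanceAs (Projective (ModuleCat.of R F₂))
      · exact Projective.projective_over _
    π := (ChainComplex.toSingle₀Equiv _ _).symm
      ⟨ModuleCat.ofHom ε, by rw [ChainComplex.mk_d_1_0]; exact hd₁ε⟩
    quasiIso := ⟨fun n ↦ by
      rcases n with _ | _ | n
      · rw [ChainComplex.quasiIsoAt₀_iff, ShortComplex.quasiIso_iff_of_zeros']
        · refine (ShortComplex.exact_and_epi_g_iff_of_iso
            (ShortComplex.isoMk (Iso.refl _) (Iso.refl _) (Iso.refl _)
              (by simp) (by simp) :
              _ ≅ ShortComplex.mk _ _ hd₁ε)).2 ⟨?_, ?_⟩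
          · rw [ShortComplex.moduleCat_exact_iff_range_eq_ker]
            exact h₁.linearMap_ker_eq.symm
          · exact (ModuleCat.epi_iff_surjective _).2 hε
        all_goals rfl
      · rw [quasiIsoAt_iff_exactAt' _ _ (ChainComplex.exactAt_succ_single_obj _ _),
          HomologicalComplex.exactAt_iff' _ 2 1 0 (by simp) (by simp),
          ShortComplex.moduleCat_exact_iff_range_eq_ker]
        exact h₂.linearMap_ker_eq.symm
      · rw [quasiIsoAt_iff_exactAt' _ _ (ChainComplex.exactAt_succ_single_obj _ _),
          HomologicalComplex.exactAt_iff' _ (n + 2 + 1) (n + 1 + 1) (n + 1) (by simp) (by simp)]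
        dsimp [C, HomologicalComplex.sc', HomologicalComplex.shortComplexFunctor', ChainComplex.mk]
        simp only [ChainComplex.of.d, ↓reduceDIte, eqToHom_refl]
        exact CategoryTheory.exact_d_f _⟩ }

theorem projectiveResolutionOfExact_complex_d_two_one (h₂ : Function.Exact d₂ d₁)
    (h₁ : Function.Exact d₁ ε) (hε : Function.Surjective ε) :
    (projectiveResolutionOfExact h₂ h₁ hε).complex.d 2 1 = ModuleCat.ofHom d₂ :=
  ChainComplex.mk_d_2_1 ..

end Resolution

section Tor

variable {R}

-- Mathlib's `Tor` is left-derived in the second variable, so `P` resolves `M`.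
open MonoidalCategory in
theorem exact_lTensor_d_of_subsingleton_torM (X : Type) [AddCommGroup X] [Module R X]
    {M : Type} [AddCommGroup M] [Module R M] (P : ProjectiveResolution (ModuleCat.of R M))
    (n : ℕ) (htor : Subsingleton (torM R (n + 1) X M)) :
    Function.Exact (LinearMap.lTensor X (P.complex.d (n + 2) (n + 1)).hom)
      (LinearMap.lTensor X (P.complex.d (n + 1) n).hom) := by
  let F := (tensoringLeft (ModuleCat.{0} R)).obj (ModuleCat.of R X)
  let T := (F.mapHomologicalComplex (ComplexShape.down ℕ)).obj P.complex
  have hzero : Limits.IsZero (T.homology (n + 1)) :=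
    (@ModuleCat.isZero_of_subsingleton _ _ _ htor).of_iso (P.isoLeftDerivedObj F (n + 1)).symm
  have hT := (HomologicalComplex.exactAt_iff_isZero_homology _ _).mpr hzero
  rw [T.exactAt_iff' (n + 2) (n + 1) n (by simp) (by simp),
    ShortComplex.moduleCat_exact_iff_range_eq_ker] at hT
  exact LinearMap.exact_iff.mpr hT.symm

theorem injective_lTensor_ker_subtype_of_subsingleton_torM_two (X : Type) [AddCommGroup X]
    [Module R X] {M F₀ F₁ : Type} [AddCommGroup M] [Module R M]
    [AddCommGroup F₀] [Module R F₀] [Module.Projective R F₀]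
    [AddCommGroup F₁] [Module R F₁] [Module.Projective R F₁] {d : F₁ →ₗ[R] F₀} {ε : F₀ →ₗ[R] M}
    (hdε : Function.Exact d ε) (hε : Function.Surjective ε)
    (htor : Subsingleton (torM R 2 X M)) :
    Function.Injective (LinearMap.lTensor X (LinearMap.ker d).subtype) := by
  let p := Finsupp.linearCombination R (id : LinearMap.ker d → LinearMap.ker d)
  have hp : Function.Surjective p := Finsupp.linearCombination_id_surjective R _
  have hpd : Function.Exact ((LinearMap.ker d).subtype ∘ₗ p) d := by
    rw [LinearMap.exact_iff, LinearMap.range_comp, LinearMap.range_eq_top.mpr hp,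
      Submodule.map_top, Submodule.range_subtype]
  let P := projectiveResolutionOfExact hpd hdε hε
  have hP : Function.Exact (LinearMap.lTensor X (P.complex.d 3 2).hom)
      (LinearMap.lTensor X ((LinearMap.ker d).subtype ∘ₗ p)) :=
    exact_lTensor_d_of_subsingleton_torM X P 1 htor
  have hp₃ : p ∘ₗ (P.complex.d 3 2).hom = 0 := by
    have h := P.complex.d_comp_d 3 2 1
    rw [projectiveResolutionOfExact_complex_d_two_one] at h
    ext x
    exact congr($(congr(ModuleCat.Hom.hom $h)) x)
  rw [injective_iff_map_eq_zero]
  intro z hz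
  obtain ⟨z, rfl⟩ := LinearMap.lTensor_surjective X hp z
  obtain ⟨w, rfl⟩ := (hP z).mp (by rwa [LinearMap.lTensor_comp, LinearMap.comp_apply])
  exact (LinearMap.lTensor_comp_apply X p _ w).symm.trans
    (by rw [hp₃, LinearMap.lTensor_zero, LinearMap.zero_apply])

end Tor

section Presentation

variable {R}

theorem span_range_succAbove_eq_top {N : Type} [AddCommGroup N] [Module R N] {t : ℕ}
    {s : Fin (t + 1) → N} (hs : Submodule.span R (Set.range s) = ⊤) {w : Fin (t + 1) → R}
    (hw : ∑ l, w l • s l = 0) {i : Fin (t + 1)} (hwi : IsUnit (w i)) :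
    Submodule.span R (Set.range (s ∘ i.succAbove)) = ⊤ := by
  have hsi : s i ∈ Submodule.span R (Set.range (s ∘ i.succAbove)) := by
    rw [Fin.sum_univ_succAbove _ i, ← eq_neg_iff_add_eq_zero] at hw
    rw [← one_smul R (s i), ← hwi.val_inv_mul, mul_smul, hw]
    exact Submodule.smul_mem _ _ <| neg_mem <| Submodule.sum_mem _ fun j _ ↦
      Submodule.smul_mem _ _ <| Submodule.subset_span ⟨j, rfl⟩
  rw [eq_top_iff, ← hs, Submodule.span_le]
  rintro _ ⟨l, rfl⟩
  rcases i.eq_self_or_eq_succAbove l with rfl | ⟨j, rfl⟩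
  · exact hsi
  · exact Submodule.subset_span ⟨j, rfl⟩

theorem exists_fin_span_eq_top_relations_mem_maximalIdeal [IsLocalRing R] (N : Type)
    [AddCommGroup N] [Module R N] [Module.Finite R N] :
    ∃ (t : ℕ) (s : Fin t → N), Submodule.span R (Set.range s) = ⊤ ∧
      ∀ w : Fin t → R, ∑ l, w l • s l = 0 → ∀ l, w l ∈ maximalIdeal R := by
  classical
  have hex : ∃ t, ∃ s : Fin t → N, Submodule.span R (Set.range s) = ⊤ := Module.Finite.exists_fin
  obtain ⟨s, hs⟩ := Nat.find_spec hex
  have hmin : ∀ t < Nat.find hex, ¬∃ s : Fin t → N, Submodule.span R (Set.range s) = ⊤ :=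
    fun t ht ↦ Nat.find_min hex ht
  generalize Nat.find hex = n at s hs hmin
  refine ⟨n, s, hs, fun w hw l ↦ by_contra fun hwl ↦ ?_⟩
  obtain ⟨t, rfl⟩ : ∃ t, n = t + 1 := Nat.exists_eq_add_one_of_ne_zero l.pos.ne'
  exact hmin t t.lt_succ_self ⟨_, span_range_succAbove_eq_top hs hw (notMem_maximalIdeal.mp hwl)⟩

theorem exists_span_singleton_eq_top_of_le_one {N : Type} [AddCommGroup N] [Module R N]
    {t : ℕ} {s : Fin t → N} (hs : Submodule.span R (Set.range s) = ⊤) (ht : t ≤ 1) :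
    ∃ x : N, Submodule.span R {x} = ⊤ := by
  have : Subsingleton (Fin t) := Fin.subsingleton_iff_le_one.mpr ht
  refine ⟨∑ j, s j, eq_top_iff.mpr (hs ▸ Submodule.span_le.mpr ?_)⟩
  rintro _ ⟨j, rfl⟩
  rw [Fintype.sum_subsingleton _ j]
  exact Submodule.mem_span_singleton_self _

end Presentation

section TensorCoefficients

variable {R} {ι M K : Type} [Fintype ι] [DecidableEq ι] [AddCommGroup M] [Module R M]
  [AddCommGroup K] [Module R K]

theorem sum_single_tmul_smul (ψ : (ι → R) →ₗ[R] M) (c : ι → R) (x : K) :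
    ∑ u, ψ (Pi.single u 1) ⊗ₜ[R] (c u • x) = ψ c ⊗ₜ[R] x := by
  simp_rw [← TensorProduct.smul_tmul, ← map_smul, ← TensorProduct.sum_tmul, ← map_sum]
  congr
  ext u
  simp [Finset.sum_apply, Pi.single_apply]

theorem apply_mem_mul_of_sum_tmul_eq_zero {ψ : (ι → R) →ₗ[R] M} (hψ : Function.Surjective ψ)
    {I J : Ideal R} (hI : ∀ v ∈ LinearMap.ker ψ, ∀ u, v u ∈ I) {f : K →ₗ[R] R} (hf : ∀ x, f x ∈ J) {k : ι → K}
    (hk : ∑ u, ψ (Pi.single u 1) ⊗ₜ[R] k u = 0) (u : ι) : f (k u) ∈ I * J := by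
  let Φ : (ι → R) ⊗[R] K →ₗ[R] R :=
    TensorProduct.lift ((LinearMap.mul R R).compl₂ f ∘ₗ LinearMap.proj u)
  have hΦ : ∀ y, Φ (LinearMap.rTensor K (LinearMap.ker ψ).subtype y) ∈ I * J := by
    intro y
    induction y using TensorProduct.induction_on with
    | zero => simp
    | tmul v x => exact Ideal.mul_mem_mul (hI v v.2 u) (hf x)
    | add y y' hy hy' => rw [map_add, map_add]; exact add_mem hy hy'
  obtain ⟨y, hy⟩ := (rTensor_exact K (LinearMap.exact_subtype_ker_map ψ) hψ
    (∑ u, Pi.single u 1 ⊗ₜ[R] k u)).mp (by simpa using hk)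
  convert hΦ y
  rw [hy]
  simp [Φ, Pi.single_apply]

end TensorCoefficients

section Relations

variable {R} {M : Type} [AddCommGroup M] [Module R M] {ψ : (Fin 2 → R) →ₗ[R] M} {t : ℕ}
  {a : Fin t → Fin 2 → R}

theorem mul_eq_mul_of_mem_ker_of_faithfulSMul [FaithfulSMul R M] (hψ : Function.Surjective ψ)
    {v w : Fin 2 → R} (hv : v ∈ LinearMap.ker ψ) (hw : w ∈ LinearMap.ker ψ) :
    v 0 * w 1 = v 1 * w 0 := by
  refine sub_eq_zero.mp (FaithfulSMul.eq_of_smul_eq_smul (α := M) fun m ↦ ?_)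
  obtain ⟨x, rfl⟩ := hψ m
  -- Cramer's rule
  have hcramer : (v 0 * w 1 - v 1 * w 0) • x =
      (x 0 * w 1 - x 1 * w 0) • v + (x 1 * v 0 - x 0 * v 1) • w := by
    ext u; fin_cases u <;> simp <;> ring
  rw [← map_smul, hcramer, zero_smul, map_add, map_smul, map_smul, LinearMap.mem_ker.mp hv,
    LinearMap.mem_ker.mp hw, smul_zero, smul_zero, add_zero]

theorem apply_smul_eq_apply_smul_of_mem_ker_of_faithfulSMul [FaithfulSMul R M]
    (hψ : Function.Surjective ψ)
    {v w : Fin 2 → R} (hv : v ∈ LinearMap.ker ψ) (hw : w ∈ LinearMap.ker ψ) (u : Fin 2) :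
    w u • v = v u • w := by
  have h := mul_eq_mul_of_mem_ker_of_faithfulSMul hψ hv hw
  ext u'
  fin_cases u <;> fin_cases u' <;> simp <;>
    first | ring | linear_combination h | linear_combination -h

theorem apply_mem_mul_of_injective_lTensor [FaithfulSMul R M] (hψ : Function.Surjective ψ)
    {I J : Ideal R} (hI : ∀ v ∈ LinearMap.ker ψ, ∀ u, v u ∈ I) (ha : ∀ j, a j ∈ LinearMap.ker ψ)
    (hrel : ∀ w ∈ LinearMap.ker (Fintype.linearCombination R a), ∀ l, w l ∈ J)
    (hinj : Function.Injective
      (LinearMap.lTensor M (LinearMap.ker (Fintype.linearCombination R a)).subtype))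
    {i j : Fin t} (hij : i ≠ j) (u : Fin 2) : a j u ∈ I * J := by
  classical
  set K := LinearMap.ker (Fintype.linearCombination R a)
  have hk : ∀ u, a j u • Pi.single i 1 - a i u • Pi.single j 1 ∈ K := fun u ↦ by
    simp [K, Fintype.linearCombination_apply_single,
      apply_smul_eq_apply_smul_of_mem_ker_of_faithfulSMul hψ (ha i) (ha j)]
  let k : Fin 2 → K := fun u ↦ ⟨_, hk u⟩
  have hsum : ∑ u, ψ (Pi.single u 1) ⊗ₜ[R] k u = 0 := by
    refine hinj ?_
    simp only [map_sum, LinearMap.lTensor_tmul, Submodule.subtype_apply, k, TensorProduct.tmul_sub,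
      Finset.sum_sub_distrib, sum_single_tmul_smul, LinearMap.mem_ker.mp (ha i),
      LinearMap.mem_ker.mp (ha j), TensorProduct.zero_tmul, sub_zero, map_zero]
  simpa [k, hij] using apply_mem_mul_of_sum_tmul_eq_zero hψ hI
    (f := LinearMap.proj i ∘ₗ K.subtype) (fun w ↦ hrel w w.2 i) hsum u

theorem eq_zero_of_injective_lTensor [IsLocalRing R] [FaithfulSMul R M]
    (hψ : Function.Surjective ψ) (ht : 1 < t)
    (hspan : Submodule.span R (Set.range a) = LinearMap.ker ψ)
    (hrel : ∀ w ∈ LinearMap.ker (Fintype.linearCombination R a), ∀ l, w l ∈ maximalIdeal R)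
    (hinj : Function.Injective
      (LinearMap.lTensor M (LinearMap.ker (Fintype.linearCombination R a)).subtype))
    (j : Fin t) : a j = 0 := by
  let I : Ideal R := Ideal.span (Set.range fun p : Fin t × Fin 2 ↦ a p.1 p.2)
  have hI : ∀ v ∈ LinearMap.ker ψ, ∀ u, v u ∈ I := by
    rw [← hspan]
    intro v hv
    induction hv using Submodule.span_induction with
    | mem v hv => obtain ⟨l, rfl⟩ := hv; exact fun u ↦ Ideal.subset_span ⟨(l, u), rfl⟩
    | zero => simp
    | add v w _ _ hv hw => exact fun u ↦ add_mem (hv u) (hw u)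
    | smul c v _ hv => exact fun u ↦ Ideal.mul_mem_left _ c (hv u)
  have ha : ∀ l, a l ∈ LinearMap.ker ψ := fun l ↦ hspan ▸ Submodule.subset_span ⟨l, rfl⟩
  have : Nontrivial (Fin t) := Fin.nontrivial_iff_two_le.mpr ht
  have hle : I ≤ maximalIdeal R • I := by
    rw [Ideal.span_le]
    rintro _ ⟨⟨l, u⟩, rfl⟩
    obtain ⟨i, hil⟩ := exists_ne l
    rw [smul_eq_mul, mul_comm]
    exact apply_mem_mul_of_injective_lTensor hψ hI ha hrel hinj hil u
  have hI0 : I = ⊥ := Submodule.eq_bot_of_le_smul_of_le_jacobson_bot _ _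
    (Submodule.fg_span (Set.finite_range _)) hle (maximalIdeal_le_jacobson ⊥)
  ext u
  have hmem : a j u ∈ I := Ideal.subset_span ⟨(j, u), rfl⟩
  rwa [hI0, Ideal.mem_bot] at hmem

end Relations

theorem stmt19 [IsLocalRing R]
    (M N : Type) [AddCommGroup M] [Module R M] [AddCommGroup N] [Module R N]
    [Module.Finite R N]
    (φ : N →ₗ[R] (Fin 2 → R)) (ψ : (Fin 2 → R) →ₗ[R] M)
    (hφ : Function.Injective φ) (hψ : Function.Surjective ψ)
    (hexact : LinearMap.ker ψ = LinearMap.range φ)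
    (hfaithful : FaithfulSMul R M)
    (htor : Subsingleton (torM R 2 M M)) :
    ∃ x : N, Submodule.span R {x} = ⊤ := by
  obtain ⟨t, s, hs, hmin⟩ := exists_fin_span_eq_top_relations_mem_maximalIdeal (R := R) N
  rcases le_or_gt t 1 with ht | ht
  · exact exists_span_singleton_eq_top_of_le_one hs ht
  have hspan : Submodule.span R (Set.range (φ ∘ s)) = LinearMap.ker ψ := by
    rw [Set.range_comp, ← Submodule.map_span, hs, Submodule.map_top, hexact]
  have hrel : ∀ w ∈ LinearMap.ker (Fintype.linearCombination R (φ ∘ s)), ∀ l,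
      w l ∈ maximalIdeal R := fun w hw ↦ hmin w <| hφ <| by
    simpa [Fintype.linearCombination_apply, map_sum] using hw
  have hinj := injective_lTensor_ker_subtype_of_subsingleton_torM_two M
    (d := Fintype.linearCombination R (φ ∘ s))
    (LinearMap.exact_iff.mpr (by rw [Fintype.range_linearCombination, hspan])) hψ htor
  have hs0 : ∀ j, s j = 0 := fun j ↦ hφ <| by
    rw [map_zero]
    exact eq_zero_of_injective_lTensor hψ ht hspan hrel hinj j
  refine ⟨0, eq_top_iff.mpr (hs ▸ Submodule.span_le.mpr ?_)⟩
  rintro _ ⟨j, rfl⟩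
  simp [hs0 j]
end
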